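/- Let n be a prime, let Q be a group of exponent n, let p₁, p₂ ∈ Q be nontrivial elements such that the cyclic subgroups ⟨p₁⟩ and ⟨p₂⟩ are not conjugate in Q (i.e., there is no q ∈ Q with q⟨p₁⟩q⁻¹ = ⟨p₂⟩), let φ : ⟨p₁⟩ ≃ ⟨p₂⟩ be the isomorphism with φ(p₁) = p₂, and let G = HNN(Q, ⟨p₁⟩, ⟨p₂⟩, φ) with canonical embedding of : Q → G. Let A ∈ G be an element not conjugate in G to any element of of(Q), and let q₀ ∈ of(Q) be such that A⁻¹ q₀ A ∈ of(Q) and A⁻² q₀ A² ∈ of(Q). Then A⁻¹ q₀ A = q₀. -/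

import Mathlib

/-!
Write `A = g₀ t^{u₁} g₁ ⋯ t^{u_k} g_k` in reduced form; `k ≥ 1` since `A` is not conjugate into
`Q`. By Britton's lemma, if `A⁻¹ x A ∈ Q` for some `x ≠ 1`, every stable letter has to be absorbed:
`g₀⁻¹ x g₀` lies in the edge group entered by `t^{-u₁}`, and after crossing it the element lies in
the other edge group. The edge groups have prime order and are not conjugate in `Q`, so the next
letter must be `t^{-u₁}` and `g₁` normalizes, hence (exponent `n` prime) centralizes, the cyclic
edge group. Thus the letters alternate and `A⁻¹ x A` is `g_k⁻¹ X g_k` where `X` is `g₀⁻¹ x g₀` or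
its image under `φ^{±1}`, depending on the parity of `k`. Conjugating a second time, the element
`g_k g₀` must carry this `X` back into the edge group of `g₀⁻¹ x g₀`: for odd `k` it would conjugate
one edge group onto the other, and for even `k` it centralizes `g₀⁻¹ x g₀`, so `A⁻¹ x A = x`.
-/

open Subgroup

theorem Subgroup.zpowers_eq_of_mem_of_prime_card {G : Type*} [Group G] {H : Subgroup G}
    (hH : (Nat.card H).Prime) {x : G} (hx : x ∈ H) (hx1 : x ≠ 1) : zpowers x = H := by
  have : Fact (Nat.card H).Prime := ⟨hH⟩
  have htop := zpowers_eq_top_of_prime_card rfl (g := (⟨x, hx⟩ : H)) (by simpa using hx1)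
  simpa [MonoidHom.map_zpowers, ← MonoidHom.range_eq_map] using congrArg (map H.subtype) htop

/-- Conjugation by `c` acts on `⟨x⟩` as `y ↦ y ^ m`; since `c ^ n = 1`, `x ^ (m ^ n) = x`, and
Fermat's little theorem `m ^ n ≡ m [ZMOD n]` turns this into `x ^ m = x`. -/
theorem conj_eq_self_of_conj_mem_zpowers {G : Type*} [Group G] {n : ℕ} (hn : n.Prime)
    (hexp : ∀ g : G, g ^ n = 1) {c x : G} (h : c⁻¹ * x * c ∈ zpowers x) :
    c⁻¹ * x * c = x := by
  obtain ⟨m, hm : x ^ m = c⁻¹ * x * c⟩ := h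
  have iterate (j : ℕ) : (c ^ j)⁻¹ * x * c ^ j = x ^ m ^ j := by
    induction j with
    | zero => simp
    | succ j ih =>
      calc (c ^ (j + 1))⁻¹ * x * c ^ (j + 1) = c⁻¹ * ((c ^ j)⁻¹ * x * c ^ j) * c⁻¹⁻¹ := by group
        _ = (c⁻¹ * x * c⁻¹⁻¹) ^ m ^ j := by rw [ih, conj_zpow]
        _ = x ^ m ^ (j + 1) := by rw [inv_inv, ← hm, ← zpow_mul, pow_succ, mul_comm]
  have fermat : x ^ m ^ n = x ^ m := zpow_eq_zpow_iff_modEq.2 <|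
    (Int.ModEq.pow_prime_eq_self hn m).of_dvd <|
      Int.natCast_dvd_natCast.2 (orderOf_dvd_of_pow_eq_one (hexp x))
  rw [← hm, ← fermat, ← iterate, hexp, inv_one, one_mul, mul_one]

theorem prime_card_zpowers_of_pow_eq_one {G : Type*} [Group G] {n : ℕ} (hn : n.Prime) {x : G}
    (hx : x ^ n = 1) (hx1 : x ≠ 1) : (Nat.card (zpowers x)).Prime := by
  have : Fact n.Prime := ⟨hn⟩
  rwa [Nat.card_zpowers, orderOf_eq_prime hx hx1]

namespace HNNExtension

variable {G : Type*} [Group G] {A B : Subgroup G} (φ : A ≃* B)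

theorem exists_mem_toSubgroup_of_eq_conj {u : ℤˣ} {x : G} (hx : x ∈ toSubgroup A B (-u))
    (hx1 : x ≠ 1) : ∃ z ∈ toSubgroup A B u, z ≠ 1 ∧
      (of z : HNNExtension G A B φ) = t ^ (-(u : ℤ)) * of x * t ^ (u : ℤ) := by
  rcases Int.units_eq_one_or u with rfl | rfl
  · exact ⟨φ.symm ⟨x, hx⟩, (φ.symm ⟨x, hx⟩).2, by simpa [← Subtype.coe_ne_coe] using hx1,
      by simpa using equiv_symm_eq_conj (φ := φ) ⟨x, hx⟩⟩
  · exact ⟨φ ⟨x, hx⟩, (φ ⟨x, hx⟩).2, by simpa [← Subtype.coe_ne_coe] using hx1,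
      by simpa using equiv_eq_conj (φ := φ) ⟨x, hx⟩⟩

/-- A nontrivial `z` generates its edge group, so a conjugate of `z` in the other edge group would
conjugate `A` onto `B`. -/
theorem eq_and_conj_eq_self_of_conj_mem_toSubgroup
    (hA : (Nat.card A).Prime) (hB : (Nat.card B).Prime)
    (hAB : ∀ c : G, A.map (MulAut.conj c).toMonoidHom ≠ B)
    (hcent : ∀ c x : G, c⁻¹ * x * c ∈ zpowers x → c⁻¹ * x * c = x)
    {u v : ℤˣ} {z c : G} (hz : z ∈ toSubgroup A B u) (hz1 : z ≠ 1)
    (hc : c⁻¹ * z * c ∈ toSubgroup A B v) : v = u ∧ c⁻¹ * z * c = z := by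
  have generated (w : ℤˣ) (x : G) (hx : x ∈ toSubgroup A B w) (hx1 : x ≠ 1) :
      zpowers x = toSubgroup A B w := by
    rcases Int.units_eq_one_or w with rfl | rfl
    · exact zpowers_eq_of_mem_of_prime_card hA hx hx1
    · exact zpowers_eq_of_mem_of_prime_card hB hx hx1
  have hz_gen := generated u z hz hz1
  obtain rfl : v = u := by
    by_contra hvu
    obtain rfl := Int.units_ne_iff_eq_neg.1 hvu
    have hcz_gen := generated _ _ hc (by simpa using (MulAut.conj c⁻¹).map_ne_one_iff.2 hz1)
    rcases Int.units_eq_one_or u with rfl | rfl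
    · apply hAB c⁻¹
      change (toSubgroup A B 1).map _ = toSubgroup A B (-1)
      rw [← hz_gen, ← hcz_gen, MonoidHom.map_zpowers]
      simp
    · apply hAB c
      change (toSubgroup A B (-(-1))).map _ = toSubgroup A B (-1)
      rw [← hz_gen, ← hcz_gen, MonoidHom.map_zpowers]
      simp [MulAut.conj_apply, mul_assoc]
  exact ⟨rfl, hcent c z (hz_gen ▸ hc)⟩

namespace NormalWord.ReducedWord

theorem exists_prod_eq (g : HNNExtension G A B φ) : ∃ w : ReducedWord G A B, w.prod φ = g := by
  obtain ⟨d⟩ := TransversalPair.nonempty G A B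
  exact ⟨(NormalWord.equiv φ d g).toReducedWord, (NormalWord.equiv φ d).symm_apply_apply g⟩

theorem prod_mk_cons (g₀ g₁ : G) (u : ℤˣ) (l : List (ℤˣ × G))
    (chain : ((u, g₁) :: l).IsChain (fun a b => a.2 ∈ toSubgroup A B a.1 → a.1 = b.1)) :
    (⟨g₀, (u, g₁) :: l, chain⟩ : ReducedWord G A B).prod φ
      = of g₀ * t ^ (u : ℤ) * (⟨g₁, l, chain.tail⟩ : ReducedWord G A B).prod φ := by
  simp [ReducedWord.prod, mul_assoc]

theorem exists_head_eq_prod_eq_mul_of (w : ReducedWord G A B) (hw : w.toList ≠ []) (y : G) :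
    ∃ w' : ReducedWord G A B, w'.head = w.head ∧ w'.prod φ = w.prod φ * of y := by
  rcases w with ⟨g₀, l, chain⟩
  obtain ⟨l', ⟨u, g⟩, rfl⟩ := (List.eq_nil_or_concat l).resolve_left hw
  rw [List.concat_eq_append] at chain
  refine ⟨⟨g₀, l' ++ [(u, g * y)], ?_⟩, rfl, ?_⟩
  · refine List.isChain_append.2 ⟨(List.isChain_append.1 chain).1, List.isChain_singleton _, ?_⟩
    intro a ha b hb
    obtain rfl : b = (u, g * y) := by simpa using hb.symm
    simpa using (List.isChain_append.1 chain).2.2 a ha (u, g) (by simp)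
  · simp [ReducedWord.prod, mul_assoc]

/-- Britton's lemma: `of x * w.prod` and `w.prod * of y` are products of reduced words with the
same letters, so their heads lie in the same coset of the edge group at the first letter. -/
theorem conj_head_mem_toSubgroup (w : ReducedWord G A B) (hw : w.toList ≠ []) (x : G)
    (h : (w.prod φ)⁻¹ * of x * w.prod φ ∈ (of : G →* HNNExtension G A B φ).range) :
    w.head⁻¹ * x * w.head ∈ toSubgroup A B (-(w.toList.head hw).1) := by
  obtain ⟨y, hy⟩ := h
  obtain ⟨w', hhead, hprod⟩ := w.exists_head_eq_prod_eq_mul_of φ hw y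
  let wx : ReducedWord G A B := ⟨x * w.head, w.toList, w.chain⟩
  have hwx : wx.prod φ = w'.prod φ := by
    rw [hprod, hy]
    simp [wx, ReducedWord.prod, mul_assoc]
  have := (HNNExtension.ReducedWord.map_fst_eq_and_of_prod_eq φ hwx).2 (w.toList.head hw).1
    (by simp [wx, List.head?_eq_some_head hw])
  simpa [wx, hhead, mul_assoc] using inv_mem this

/-- Writing `w = g₀ t^{u₁} g₁ ⋯ t^{u_k} g_k`: if conjugation by `w` maps `x ≠ 1` into the base
group, then `g_k (w⁻¹ x w) g_k⁻¹` is `g₀⁻¹ x g₀` (even `k`) or its conjugate by `t^{u₁}`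
(odd `k`). -/
theorem eq_or_eq_t_conj_of_conj_prod_eq_of
    (hA : (Nat.card A).Prime) (hB : (Nat.card B).Prime)
    (hAB : ∀ c : G, A.map (MulAut.conj c).toMonoidHom ≠ B)
    (hcent : ∀ c x : G, c⁻¹ * x * c ∈ zpowers x → c⁻¹ * x * c = x)
    (w : ReducedWord G A B) (hw : w.toList ≠ []) {x y : G} (hx : x ≠ 1)
    (h : (w.prod φ)⁻¹ * of x * w.prod φ = of y) :
    (w.toList.getLast hw).2 * y * (w.toList.getLast hw).2⁻¹ = w.head⁻¹ * x * w.head ∨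
      (of ((w.toList.getLast hw).2 * y * (w.toList.getLast hw).2⁻¹) : HNNExtension G A B φ) =
        t ^ (-((w.toList.head hw).1 : ℤ)) * of (w.head⁻¹ * x * w.head) *
          t ^ ((w.toList.head hw).1 : ℤ) := by
  rcases w with ⟨g₀, l, chain⟩
  induction l generalizing g₀ x y with
  | nil => exact absurd rfl hw
  | cons a rest ih =>
    obtain ⟨u, g₁⟩ := a
    have hX : g₀⁻¹ * x * g₀ ∈ toSubgroup A B (-u) :=
      conj_head_mem_toSubgroup φ ⟨g₀, _, chain⟩ hw x ⟨y, h.symm⟩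
    obtain ⟨z, hz, hz1, hzX⟩ := exists_mem_toSubgroup_of_eq_conj φ hX
      (by simpa using (MulAut.conj g₀⁻¹).map_ne_one_iff.2 hx)
    let tail : ReducedWord G A B := ⟨g₁, rest, chain.tail⟩
    have htail : (tail.prod φ)⁻¹ * of z * tail.prod φ = of y := by
      rw [← h, prod_mk_cons, hzX]
      simp [tail, mul_assoc]
    rcases rest with _ | ⟨⟨v, g₂⟩, rest⟩
    · right
      have hy : y = g₁⁻¹ * z * g₁ := of_injective (φ := φ) <| by
        simpa [tail, ReducedWord.prod, mul_assoc] using htail.symm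
      simpa [hy, mul_assoc] using hzX
    · have hrest : ((v, g₂) :: rest) ≠ [] := List.cons_ne_nil _ _
      have hcz : g₁⁻¹ * z * g₁ ∈ toSubgroup A B (-v) :=
        tail.conj_head_mem_toSubgroup φ hrest z ⟨y, htail.symm⟩
      obtain ⟨hv, hfix⟩ :=
        eq_and_conj_eq_self_of_conj_mem_toSubgroup hA hB hAB hcent hz hz1 hcz
      obtain rfl : v = -u := by rw [← hv, neg_neg]
      rcases ih hz1 g₁ chain.tail hrest htail with hlast | hlast
      · right
        simpa [List.getLast_cons hrest, hlast, hfix] using hzX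
      · left
        apply of_injective (φ := φ)
        simp only [List.getLast_cons hrest] at hlast ⊢
        rw [hlast, hfix, hzX]
        simp [mul_assoc]

end NormalWord.ReducedWord

end HNNExtension

open HNNExtension NormalWord

theorem conj_eq_self_of_two_conjugates_in_base_general
    (n : ℕ) (hp : n.Prime)
    {Q : Type*} [Group Q] (hQexp : ∀ q : Q, q ^ n = 1)
    (p₁ p₂ : Q) (h₁ : p₁ ≠ 1) (h₂ : p₂ ≠ 1)
    (hconj : ∀ q : Q,
      (Subgroup.zpowers p₁).map (MulAut.conj q).toMonoidHom ≠ Subgroup.zpowers p₂)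
    (φ : (Subgroup.zpowers p₁) ≃* (Subgroup.zpowers p₂))
    (A : HNNExtension Q (Subgroup.zpowers p₁) (Subgroup.zpowers p₂) φ)
    (hA : ¬ ∃ q ∈ (HNNExtension.of :
        Q →* HNNExtension Q (Subgroup.zpowers p₁) (Subgroup.zpowers p₂) φ).range, IsConj A q)
    (q₀ : HNNExtension Q (Subgroup.zpowers p₁) (Subgroup.zpowers p₂) φ)
    (hq₀ : q₀ ∈ (HNNExtension.of :
        Q →* HNNExtension Q (Subgroup.zpowers p₁) (Subgroup.zpowers p₂) φ).range)
    (hq₁ : A⁻¹ * q₀ * A ∈ (HNNExtension.of :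
        Q →* HNNExtension Q (Subgroup.zpowers p₁) (Subgroup.zpowers p₂) φ).range)
    (hq₂ : (A ^ 2)⁻¹ * q₀ * A ^ 2 ∈ (HNNExtension.of :
        Q →* HNNExtension Q (Subgroup.zpowers p₁) (Subgroup.zpowers p₂) φ).range) :
    A⁻¹ * q₀ * A = q₀ := by
  obtain ⟨q, rfl⟩ := hq₀
  obtain ⟨q', hq'⟩ := hq₁
  rcases eq_or_ne q 1 with rfl | hq
  · simp
  have hA₁ := prime_card_zpowers_of_pow_eq_one hp (hQexp p₁) h₁
  have hA₂ := prime_card_zpowers_of_pow_eq_one hp (hQexp p₂) h₂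
  have hcent (c x : Q) := conj_eq_self_of_conj_mem_zpowers (c := c) (x := x) hp hQexp
  have edge {u v : ℤˣ} {z c : Q} := eq_and_conj_eq_self_of_conj_mem_toSubgroup (u := u) (v := v)
    (z := z) (c := c) hA₁ hA₂ hconj hcent
  obtain ⟨w, rfl⟩ := ReducedWord.exists_prod_eq φ A
  have hw : w.toList ≠ [] := fun hnil ↦
    hA ⟨_, ⟨w.head, by simp [ReducedWord.prod, hnil]⟩, .refl _⟩
  set g₀ := w.head
  set gl := (w.toList.getLast hw).2
  have hX := w.conj_head_mem_toSubgroup φ hw q ⟨q', hq'⟩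
  have hX1 : g₀⁻¹ * q * g₀ ≠ 1 := by simpa using (MulAut.conj g₀⁻¹).map_ne_one_iff.2 hq
  have hq'_conj : g₀⁻¹ * q' * g₀ = (gl * g₀)⁻¹ * (gl * q' * gl⁻¹) * (gl * g₀) := by group
  have hX' := hq'_conj ▸ w.conj_head_mem_toSubgroup φ hw q' <| hq₂.imp fun _ h ↦ by
    rw [h, hq', pow_two]; group
  suffices q' = q by rw [← hq', this]
  rcases w.eq_or_eq_t_conj_of_conj_prod_eq_of φ hA₁ hA₂ hconj hcent hw hq hq'.symm with
    heven | hodd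
  · rw [heven] at hX'
    exact mul_left_cancel (mul_right_cancel (hq'_conj.trans (heven ▸ (edge hX hX1 hX').2)))
  · obtain ⟨z, hz, hz1, hzX⟩ := exists_mem_toSubgroup_of_eq_conj φ hX hX1
    rw [of_injective (φ := φ) (hodd.trans hzX.symm)] at hX'
    exact absurd (edge hz hz1 hX').1 (units_ne_neg_self _).symm

/-- the key claim in the proof of Corollary 2. -/
theorem conj_eq_self_of_two_conjugates_in_base
    (n : ℕ) (hp : n.Prime)
    {Q : Type*} [Group Q] (hQexp : ∀ q : Q, q ^ n = 1)
    (p₁ p₂ : Q) (h₁ : p₁ ≠ 1) (h₂ : p₂ ≠ 1)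
    (hconj : ∀ q : Q,
      (Subgroup.zpowers p₁).map (MulAut.conj q).toMonoidHom ≠ Subgroup.zpowers p₂)
    (φ : (Subgroup.zpowers p₁) ≃* (Subgroup.zpowers p₂))
    (hφ : φ ⟨p₁, Subgroup.mem_zpowers p₁⟩ = ⟨p₂, Subgroup.mem_zpowers p₂⟩)
    (A : HNNExtension Q (Subgroup.zpowers p₁) (Subgroup.zpowers p₂) φ)
    (hA : ¬ ∃ q ∈ (HNNExtension.of :
        Q →* HNNExtension Q (Subgroup.zpowers p₁) (Subgroup.zpowers p₂) φ).range, IsConj A q)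
    (q₀ : HNNExtension Q (Subgroup.zpowers p₁) (Subgroup.zpowers p₂) φ)
    (hq₀ : q₀ ∈ (HNNExtension.of :
        Q →* HNNExtension Q (Subgroup.zpowers p₁) (Subgroup.zpowers p₂) φ).range)
    (hq₁ : A⁻¹ * q₀ * A ∈ (HNNExtension.of :
        Q →* HNNExtension Q (Subgroup.zpowers p₁) (Subgroup.zpowers p₂) φ).range)
    (hq₂ : (A ^ 2)⁻¹ * q₀ * A ^ 2 ∈ (HNNExtension.of :
        Q →* HNNExtension Q (Subgroup.zpowers p₁) (Subgroup.zpowers p₂) φ).range) :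
    A⁻¹ * q₀ * A = q₀ :=
  conj_eq_self_of_two_conjugates_in_base_general n hp hQexp p₁ p₂ h₁ h₂ hconj φ A hA q₀ hq₀ hq₁ hq₂
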